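/- (Improved convergence condition for NST+HT+FB.) Suppose y = Ax (noiseless) with x s-sparse, and the RIP constant δ_{2s} of A and the preconditioned RIP constant γ_{3s} of A satisfy δ_{2s}² + 2γ_{3s}² < 1. Then the sequence {u^k} of NST+HT+FB iterates satisfies ‖x - u^k‖₂ ≤ ρ^k ‖x - μ^0‖₂ with ρ = √(2γ_{3s}²/(1-δ_{2s}²)) < 1; in particular u^k → x. -/

import Mathlib

open Matrix Finset Real MeasureTheory ProbabilityTheory
open scoped BigOperators

noncomputable section

/-- squared Euclidean norm -/
def nsq {n : ℕ} (v : Fin n → ℝ) : ℝ := ∑ i, v i ^ 2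

/-- Euclidean norm -/
def nrm {n : ℕ} (v : Fin n → ℝ) : ℝ := Real.sqrt (∑ i, v i ^ 2)

open Classical in
/-- support of a vector, as a finset -/
def suppF {n : ℕ} (x : Fin n → ℝ) : Finset (Fin n) :=
  Finset.univ.filter (fun i => x i ≠ 0)

/-- `x` is `s`-sparse -/
def Sparse {n : ℕ} (s : ℕ) (x : Fin n → ℝ) : Prop := (suppF x).card ≤ s

/-- `δ` is a restricted isometry constant of order `t` for `A`:
`(1-δ)‖x‖² ≤ ‖Ax‖² ≤ (1+δ)‖x‖²` for all `t`-sparse `x`. -/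
def IsRIP {M N : ℕ} (A : Matrix (Fin M) (Fin N) ℝ) (t : ℕ) (δ : ℝ) : Prop :=
  ∀ x : Fin N → ℝ, Sparse t x →
    (1 - δ) * nsq x ≤ nsq (A.mulVec x) ∧ nsq (A.mulVec x) ≤ (1 + δ) * nsq x

/-- restriction of a vector to an index set (zeroing entries outside it) -/
def restr {n : ℕ} (T : Finset (Fin n)) (x : Fin n → ℝ) : Fin n → ℝ :=
  fun i => if i ∈ T then x i else 0

/-- submatrix of the columns of `A` indexed by `T` -/
def colSub {M N : ℕ} (A : Matrix (Fin M) (Fin N) ℝ) (T : Finset (Fin N)) :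
    Matrix (Fin M) T ℝ :=
  fun i j => A i j.val

/-- the feedback step: `μ'_T = x_T + (A_Tᵀ A_T)⁻¹ A_Tᵀ A_{Tᶜ} x_{Tᶜ}`, `μ'_{Tᶜ} = 0`. -/
def feedback {M N : ℕ} (A : Matrix (Fin M) (Fin N) ℝ) (T : Finset (Fin N))
    (x : Fin N → ℝ) : Fin N → ℝ :=
  fun i => if h : i ∈ T then
    x i + ((((colSub A T)ᵀ * colSub A T)⁻¹ * (colSub A T)ᵀ).mulVec
      (A.mulVec (restr Tᶜ x))) ⟨i, h⟩
  else 0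

/-- `hatAbs x k` is the `k`-th largest absolute entry of `x` (1-based index). -/
def hatAbs {n : ℕ} (x : Fin n → ℝ) (k : ℕ) : ℝ :=
  if h : k - 1 < n then |x (Tuple.sort (fun i => -|x i|) ⟨k - 1, h⟩)| else 0

/-- `T` contains the indices of the `p` largest absolute entries of `x`. -/
def containsTop {n : ℕ} (x : Fin n → ℝ) (p : ℕ) (T : Finset (Fin n)) : Prop :=
  ∀ j : Fin n, (j : ℕ) < p → Tuple.sort (fun i => -|x i|) j ∈ T

/-- The NST+HT+FB algorithm: `T k` is the set of the `s` largest absolute entries of the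
feasible iterate `x^k`, `μ^k` is the thresholding-plus-feedback of `x^k` on `T k`, and
`x^{k+1} = μ^k + Aᵀ(AAᵀ)⁻¹(y - Aμ^k)` is the null space tuning step. -/
def NSTSpec {M N : ℕ} (A : Matrix (Fin M) (Fin N) ℝ) (y : Fin M → ℝ) (s : ℕ)
    (T : ℕ → Finset (Fin N)) (xs μ : ℕ → Fin N → ℝ) : Prop :=
  (∀ k, A.mulVec (xs k) = y) ∧
  (∀ k, (T k).card = s) ∧
  (∀ k, ∀ i ∈ T k, ∀ j ∉ T k, |xs k j| ≤ |xs k i|) ∧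
  (∀ k, μ k = feedback A (T k) (xs k)) ∧
  (∀ k, xs (k + 1) = μ k + (Aᵀ * (A * Aᵀ)⁻¹).mulVec (y - A.mulVec (μ k)))

/-- The adaptive AdptNST+HT+FB algorithm: identical to NST+HT+FB except that at step `k`
the index set `T k` consists of the `k` largest absolute entries of `x^k`. -/
def AdptSpec {M N : ℕ} (A : Matrix (Fin M) (Fin N) ℝ) (y : Fin M → ℝ)
    (T : ℕ → Finset (Fin N)) (xs μ : ℕ → Fin N → ℝ) : Prop :=
  (∀ k, A.mulVec (xs k) = y) ∧
  (∀ k, (T k).card = k) ∧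
  (∀ k, ∀ i ∈ T k, ∀ j ∉ T k, |xs k j| ≤ |xs k i|) ∧
  (∀ k, μ k = feedback A (T k) (xs k)) ∧
  (∀ k, xs (k + 1) = μ k + (Aᵀ * (A * Aᵀ)⁻¹).mulVec (y - A.mulVec (μ k)))

open scoped ComplexOrder in
/-- The positive semidefinite square root of a positive semidefinite matrix
(the former `Matrix.PosSemidef.sqrt`, removed from Mathlib). -/
def psdSqrt {n : Type*} [Fintype n] [DecidableEq n] {𝕜 : Type*} [RCLike 𝕜]
    {A : Matrix n n 𝕜} (hA : A.PosSemidef) : Matrix n n 𝕜 :=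
  (hA.1.eigenvectorUnitary : Matrix n n 𝕜) *
    diagonal ((↑) ∘ Real.sqrt ∘ hA.1.eigenvalues : n → 𝕜) *
    (star hA.1.eigenvectorUnitary : Matrix n n 𝕜)

/-! Write `eₖ = x - μᵏ` and `S` for the support of `x`. The feedback step makes `μᵏ⁺¹` the
least-squares fit of `xᵏ⁺¹` on `Tₖ₊₁`, and `Axᵏ⁺¹ = Ax`, so `A eₖ₊₁` is orthogonal to the columns
indexed by `Tₖ₊₁`. Polarizing the RIP of order `2s` (`|⟪Au, Av⟫ - ⟪u, v⟫| ≤ δ ‖u‖ ‖v‖` on a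
common support of size `2s`) turns this into `(1 - δ²) ‖eₖ₊₁‖² ≤ ‖x off Tₖ₊₁‖²`. Since `Tₖ₊₁`
holds the largest entries of `xᵏ⁺¹`, the latter is at most `2 ‖(x - xᵏ⁺¹) on S ∪ Tₖ₊₁‖²`.
Finally `x - xᵏ⁺¹ = (I - BᵀB) eₖ` with `B = (AAᵀ)^{-1/2} A`, which has orthonormal rows and RIP
constant `γ` of order `3s`, and the same polarization for `B` bounds this restriction by
`γ² ‖eₖ‖²`. Hence `‖eₖ₊₁‖² ≤ ρ² ‖eₖ‖²`. -/

section Norms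

variable {n : ℕ}

lemma nsq_eq_dotProduct (v : Fin n → ℝ) : nsq v = v ⬝ᵥ v := by
  simp only [nsq, dotProduct, sq]

lemma nsq_nonneg (v : Fin n → ℝ) : 0 ≤ nsq v :=
  Finset.sum_nonneg fun _ _ => sq_nonneg _

lemma nsq_eq_zero_iff {v : Fin n → ℝ} : nsq v = 0 ↔ v = 0 := by
  rw [nsq_eq_dotProduct, dotProduct_self_eq_zero]

lemma nrm_eq_sqrt_nsq (v : Fin n → ℝ) : nrm v = √(nsq v) := rfl

lemma nsq_restr (T : Finset (Fin n)) (v : Fin n → ℝ) :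
    nsq (restr T v) = ∑ i ∈ T, v i ^ 2 := by
  rw [nsq, ← Finset.sum_subset (Finset.subset_univ T) fun i _ hi => by simp [restr, hi]]
  exact Finset.sum_congr rfl fun i hi => by simp [restr, hi]

lemma nsq_restr_eq_dotProduct (T : Finset (Fin n)) (v : Fin n → ℝ) :
    nsq (restr T v) = restr T v ⬝ᵥ v := by
  rw [nsq_restr, dotProduct, ← Finset.sum_subset (Finset.subset_univ T)
    fun i _ hi => by simp [restr, hi]]
  exact Finset.sum_congr rfl fun i hi => by simp [restr, hi, sq]

lemma nsq_restr_add_nsq_restr_compl (T : Finset (Fin n)) (v : Fin n → ℝ) :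
    nsq (restr T v) + nsq (restr Tᶜ v) = nsq v := by
  rw [nsq_restr, nsq_restr, Finset.sum_add_sum_compl, nsq]

lemma restr_add_compl (T : Finset (Fin n)) (v : Fin n → ℝ) : restr T v + restr Tᶜ v = v := by
  funext i
  by_cases h : i ∈ T <;> simp [restr, h]

lemma support_restr_subset (T : Finset (Fin n)) (v : Fin n → ℝ) :
    Function.support (restr T v) ⊆ Function.support v := fun i hi h => hi (by simp [restr, h])

lemma support_restr_subset_finset (T : Finset (Fin n)) (v : Fin n → ℝ) :
    Function.support (restr T v) ⊆ T := fun i hi => by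
  by_contra h
  exact hi (by simp [restr, show i ∉ T from h])

lemma support_subset_suppF (v : Fin n → ℝ) : Function.support v ⊆ suppF v := fun i hi => by
  simpa [suppF] using hi

lemma sparse_of_support_subset {t : ℕ} {v : Fin n → ℝ} {W : Finset (Fin n)}
    (hv : Function.support v ⊆ W) (hW : W.card ≤ t) : Sparse t v :=
  (Finset.card_le_card fun i hi => hv (by simpa [suppF] using hi)).trans hW

end Norms

section RIP

variable {M N t : ℕ} {A : Matrix (Fin M) (Fin N) ℝ} {δ : ℝ} {W : Finset (Fin N)}

lemma IsRIP.abs_nsq_mulVec_sub_le (hA : IsRIP A t δ) (hW : W.card ≤ t) {z : Fin N → ℝ}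
    (hz : Function.support z ⊆ W) : |nsq (A *ᵥ z) - nsq z| ≤ δ * nsq z := by
  obtain ⟨hlo, hhi⟩ := hA z (sparse_of_support_subset hz hW)
  rw [abs_le]
  constructor <;> linarith

lemma IsRIP.sq_dotProduct_sub_le (hA : IsRIP A t δ) (hW : W.card ≤ t) {u v : Fin N → ℝ}
    (hu : Function.support u ⊆ W) (hv : Function.support v ⊆ W) :
    ((A *ᵥ u) ⬝ᵥ (A *ᵥ v) - u ⬝ᵥ v) ^ 2 ≤ δ ^ 2 * nsq u * nsq v := by
  set g := (A *ᵥ u) ⬝ᵥ (A *ᵥ v) - u ⬝ᵥ v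
  have hcomb : ∀ τ c : ℝ, Function.support (τ • u + c • v) ⊆ W := fun τ c =>
    (Function.support_add _ _).trans (Set.union_subset
      ((Function.support_const_smul_subset _ _).trans hu)
      ((Function.support_const_smul_subset _ _).trans hv))
  -- polarization: `4 τ g` is the difference of the RIP defects of `τ u + v` and `τ u - v`,
  -- and the discriminant of the resulting quadratic in `τ` is `16 (g ^ 2 - δ ^ 2 ‖u‖² ‖v‖²)`
  have hquad : ∀ τ : ℝ, 0 ≤ 2 * δ * nsq u * (τ * τ) + -4 * g * τ + 2 * δ * nsq v := by
    intro τ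
    have hp := abs_le.1 (hA.abs_nsq_mulVec_sub_le hW (hcomb τ 1))
    have hm := abs_le.1 (hA.abs_nsq_mulVec_sub_le hW (hcomb τ (-1)))
    have hcomm : (A *ᵥ v) ⬝ᵥ (A *ᵥ u) = (A *ᵥ u) ⬝ᵥ (A *ᵥ v) := dotProduct_comm _ _
    have hcomm' : v ⬝ᵥ u = u ⬝ᵥ v := dotProduct_comm _ _
    simp only [nsq_eq_dotProduct, mulVec_add, mulVec_smul, add_dotProduct, dotProduct_add,
      smul_dotProduct, dotProduct_smul, smul_eq_mul, hcomm, hcomm', g] at hp hm ⊢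
    linarith [hp.2, hm.1]
  have hdisc := discrim_le_zero hquad
  rw [discrim] at hdisc
  nlinarith

lemma IsRIP.nsq_le_of_nsq_eq (hA : IsRIP A t δ) (hW : W.card ≤ t) {u v : Fin N → ℝ}
    (hu : Function.support u ⊆ W) (hv : Function.support v ⊆ W)
    (huv : nsq u = u ⬝ᵥ v - (A *ᵥ u) ⬝ᵥ (A *ᵥ v)) : nsq u ≤ δ ^ 2 * nsq v := by
  have key := hA.sq_dotProduct_sub_le hW hu hv
  rw [show (A *ᵥ u) ⬝ᵥ (A *ᵥ v) - u ⬝ᵥ v = -nsq u by linarith, neg_sq] at key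
  rcases (nsq_nonneg u).eq_or_lt with h0 | hpos
  · rw [← h0]
    exact mul_nonneg (sq_nonneg δ) (nsq_nonneg v)
  · nlinarith

lemma IsRIP.one_sub_sq_mul_nsq_le (hA : IsRIP A t δ) (hW : W.card ≤ t) {v : Fin N → ℝ}
    (hv : Function.support v ⊆ W) (T : Finset (Fin N))
    (horth : (A *ᵥ restr T v) ⬝ᵥ (A *ᵥ v) = 0) :
    (1 - δ ^ 2) * nsq v ≤ nsq (restr Tᶜ v) := by
  have hT := hA.nsq_le_of_nsq_eq hW ((support_restr_subset T v).trans hv) hv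
    (by rw [horth, sub_zero, nsq_restr_eq_dotProduct])
  linarith [nsq_restr_add_nsq_restr_compl T v]

lemma IsRIP.nsq_restr_sub_gram_mulVec_le (hA : IsRIP A t δ) {V : Finset (Fin N)}
    (hWV : (W ∪ V).card ≤ t) {e : Fin N → ℝ} (he : Function.support e ⊆ V) :
    nsq (restr W (e - (Aᵀ * A) *ᵥ e)) ≤ δ ^ 2 * nsq e := by
  refine hA.nsq_le_of_nsq_eq hWV ?_ (he.trans (by simp)) ?_
  · exact (support_restr_subset_finset W _).trans (by simp)
  · rw [nsq_restr_eq_dotProduct, dotProduct_sub, ← mulVec_mulVec, dotProduct_mulVec,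
      vecMul_transpose]

lemma IsRIP.eq_zero_of_mulVec_eq_zero (hA : IsRIP A t δ) (hδ : δ < 1) {z : Fin N → ℝ}
    (hz : Sparse t z) (hAz : A *ᵥ z = 0) : z = 0 := by
  have hlo := (hA z hz).1
  rw [hAz, show nsq (0 : Fin M → ℝ) = 0 by simp [nsq]] at hlo
  exact nsq_eq_zero_iff.1 (le_antisymm (by nlinarith [nsq_nonneg z]) (nsq_nonneg z))

end RIP

section Preconditioning

variable {m : Type*} [Fintype m] [DecidableEq m]

open scoped ComplexOrder in
lemma psdSqrt_mul_self {𝕜 : Type*} [RCLike 𝕜] {A : Matrix m m 𝕜} (hA : A.PosSemidef) :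
    psdSqrt hA * psdSqrt hA = A := by
  unfold psdSqrt
  conv_rhs => rw [hA.1.spectral_theorem, Unitary.conjStarAlgAut_apply]
  simp only [Matrix.mul_assoc]
  rw [← Matrix.mul_assoc (star _) _ _, Unitary.coe_star_mul_self, Matrix.one_mul,
    ← Matrix.mul_assoc (diagonal _) (diagonal _), diagonal_mul_diagonal]
  congr 3
  funext i
  simp [← RCLike.ofReal_mul, Real.mul_self_sqrt (hA.eigenvalues_nonneg i)]

lemma psdSqrt_transpose {A : Matrix m m ℝ} (hA : A.PosSemidef) :
    (psdSqrt hA)ᵀ = psdSqrt hA := by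
  unfold psdSqrt
  rw [transpose_mul, transpose_mul, diagonal_transpose, star_eq_conjTranspose,
    conjTranspose_eq_transpose_of_trivial, transpose_transpose, Matrix.mul_assoc]

lemma psdSqrt_inv_mul_mul_psdSqrt_inv {G : Matrix m m ℝ} (hG : G.PosDef) :
    psdSqrt hG.inv.posSemidef * G * psdSqrt hG.inv.posSemidef = 1 := by
  set Q := psdSqrt hG.inv.posSemidef
  have hQQ : Q * Q = G⁻¹ := psdSqrt_mul_self hG.inv.posSemidef
  have hQ : IsUnit Q.det := by
    have h : IsUnit (Q.det * Q.det) := by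
      rw [← det_mul, hQQ]
      exact hG.inv.det_pos.ne'.isUnit
    exact isUnit_of_mul_isUnit_left h
  calc Q * G * Q = Q * (Q * Q)⁻¹ * Q := by
        rw [hQQ, nonsing_inv_nonsing_inv G hG.det_pos.ne'.isUnit]
    _ = 1 := by
        rw [Matrix.mul_inv_rev, Matrix.mul_assoc, Matrix.mul_assoc, nonsing_inv_mul _ hQ,
          Matrix.mul_one, mul_nonsing_inv _ hQ]

variable {n : Type*} [Fintype n]

/-- `(AAᵀ)^{-1/2} A`. The paper's preconditioned RIP constant `γ` only bounds it from below;
the upper bound is automatic because its rows are orthonormal. -/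
def precondMatrix (A : Matrix m n ℝ) (hpd : (A * Aᵀ).PosDef) : Matrix m n ℝ :=
  psdSqrt hpd.inv.posSemidef * A

lemma precondMatrix_mul_transpose (A : Matrix m n ℝ) (hpd : (A * Aᵀ).PosDef) :
    precondMatrix A hpd * (precondMatrix A hpd)ᵀ = 1 := by
  rw [precondMatrix, transpose_mul, psdSqrt_transpose, ← psdSqrt_inv_mul_mul_psdSqrt_inv hpd]
  simp only [Matrix.mul_assoc]

lemma precondMatrix_transpose_mul (A : Matrix m n ℝ) (hpd : (A * Aᵀ).PosDef) :
    (precondMatrix A hpd)ᵀ * precondMatrix A hpd = Aᵀ * (A * Aᵀ)⁻¹ * A := by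
  rw [precondMatrix, transpose_mul, psdSqrt_transpose, Matrix.mul_assoc,
    ← Matrix.mul_assoc _ _ A, psdSqrt_mul_self, ← Matrix.mul_assoc]

end Preconditioning

lemma nsq_mulVec_le_of_mul_transpose_eq_one {M N : ℕ} {B : Matrix (Fin M) (Fin N) ℝ}
    (hB : B * Bᵀ = 1) (z : Fin N → ℝ) : nsq (B *ᵥ z) ≤ nsq z := by
  have hadj : ∀ w, w ⬝ᵥ (Bᵀ *ᵥ (B *ᵥ z)) = (B *ᵥ w) ⬝ᵥ (B *ᵥ z) := fun w => by
    rw [dotProduct_mulVec, vecMul_transpose]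
  have hBBt : B *ᵥ (Bᵀ *ᵥ (B *ᵥ z)) = B *ᵥ z := by rw [mulVec_mulVec, hB, one_mulVec]
  have hproj : nsq (z - Bᵀ *ᵥ (B *ᵥ z)) = nsq z - nsq (B *ᵥ z) := by
    rw [nsq_eq_dotProduct, sub_dotProduct, dotProduct_sub, dotProduct_sub, hadj, hadj, hBBt,
      dotProduct_comm (Bᵀ *ᵥ _), hadj, nsq_eq_dotProduct, nsq_eq_dotProduct]
    ring
  linarith [nsq_nonneg (z - Bᵀ *ᵥ (B *ᵥ z))]

lemma isRIP_of_mul_transpose_eq_one {M N t : ℕ} {B : Matrix (Fin M) (Fin N) ℝ} {γ : ℝ}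
    (hB : B * Bᵀ = 1) (hγ : 0 ≤ γ)
    (hlo : ∀ z : Fin N → ℝ, Sparse t z → (1 - γ) * nsq z ≤ nsq (B *ᵥ z)) : IsRIP B t γ :=
  fun z hz => ⟨hlo z hz, (nsq_mulVec_le_of_mul_transpose_eq_one hB z).trans
    (le_mul_of_one_le_left (nsq_nonneg z) (by linarith))⟩

section Feedback

variable {M N : ℕ} (A : Matrix (Fin M) (Fin N) ℝ) (T : Finset (Fin N))

def zeroExtend (w : T → ℝ) : Fin N → ℝ :=
  fun i => if h : i ∈ T then w ⟨i, h⟩ else 0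

lemma mulVec_zeroExtend (w : T → ℝ) : A *ᵥ zeroExtend T w = colSub A T *ᵥ w := by
  funext r
  simp only [mulVec, dotProduct, zeroExtend, colSub, mul_dite, mul_zero]
  rw [← Finset.sum_subset (Finset.subset_univ T) fun i _ hi => dif_neg hi,
    Finset.sum_dite_of_true fun _ hi => hi, Finset.univ_eq_attach]

lemma support_zeroExtend_subset (w : T → ℝ) : Function.support (zeroExtend T w) ⊆ T :=
  fun i hi => by
    by_contra h
    exact hi (dif_neg h)

lemma zeroExtend_eq_zero_iff {w : T → ℝ} : zeroExtend T w = 0 ↔ w = 0 := by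
  refine ⟨fun h => funext fun j => ?_, fun h => by funext i; simp [zeroExtend, h]⟩
  simpa [zeroExtend] using congrFun h j

lemma restr_eq_zeroExtend (v : Fin N → ℝ) : restr T v = zeroExtend T (fun j => v j) := by
  funext i
  by_cases h : i ∈ T <;> simp [restr, zeroExtend, h]

lemma feedback_eq_restr_add_zeroExtend (z : Fin N → ℝ) :
    feedback A T z = restr T z + zeroExtend T
      ((((colSub A T)ᵀ * colSub A T)⁻¹ * (colSub A T)ᵀ) *ᵥ (A *ᵥ restr Tᶜ z)) := by
  funext i
  by_cases h : i ∈ T <;> simp [feedback, restr, zeroExtend, h]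

lemma support_feedback_subset (z : Fin N → ℝ) : Function.support (feedback A T z) ⊆ T :=
  fun i hi => by
    by_contra h
    exact hi (dif_neg h)

lemma restr_compl_sub_feedback (x z : Fin N → ℝ) :
    restr Tᶜ (x - feedback A T z) = restr Tᶜ x := by
  funext i
  by_cases h : i ∈ T <;> simp [restr, feedback, h]

variable {A T}

/-- The normal equation of the least-squares fit on `T` that the feedback step performs. -/
lemma transpose_colSub_mulVec_feedback (hG : IsUnit ((colSub A T)ᵀ * colSub A T).det)
    (z : Fin N → ℝ) :
    (colSub A T)ᵀ *ᵥ (A *ᵥ feedback A T z) = (colSub A T)ᵀ *ᵥ (A *ᵥ z) := by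
  conv_rhs => rw [← restr_add_compl T z]
  rw [feedback_eq_restr_add_zeroExtend, mulVec_add, mulVec_zeroExtend, mulVec_mulVec]
  set C := colSub A T
  have hCGC : Cᵀ * (C * ((Cᵀ * C)⁻¹ * Cᵀ)) = Cᵀ := by
    rw [← Matrix.mul_assoc, ← Matrix.mul_assoc, mul_nonsing_inv _ hG, Matrix.one_mul]
  rw [mulVec_add, mulVec_add, mulVec_add, mulVec_mulVec (A *ᵥ restr Tᶜ z) Cᵀ, hCGC]

lemma dotProduct_restr_sub_feedback (hG : IsUnit ((colSub A T)ᵀ * colSub A T).det)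
    {x z : Fin N → ℝ} (hz : A *ᵥ z = A *ᵥ x) :
    (A *ᵥ restr T (x - feedback A T z)) ⬝ᵥ (A *ᵥ (x - feedback A T z)) = 0 := by
  rw [restr_eq_zeroExtend, mulVec_zeroExtend, ← vecMul_transpose, ← dotProduct_mulVec,
    mulVec_sub A, mulVec_sub, transpose_colSub_mulVec_feedback hG, hz, sub_self, dotProduct_zero]

lemma IsRIP.isUnit_det_gram {t : ℕ} {δ : ℝ} (hA : IsRIP A t δ) (hδ : δ < 1)
    (hT : T.card ≤ t) : IsUnit ((colSub A T)ᵀ * colSub A T).det := by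
  have hinj : Function.Injective (colSub A T).mulVec := by
    intro w₁ w₂ h
    have hw : A *ᵥ zeroExtend T (w₁ - w₂) = 0 := by
      rw [mulVec_zeroExtend, mulVec_sub, h, sub_self]
    exact sub_eq_zero.1 <| (zeroExtend_eq_zero_iff T).1 <| hA.eq_zero_of_mulVec_eq_zero hδ
      (sparse_of_support_subset (support_zeroExtend_subset T _) hT) hw
  have hpos := (PosDef.conjTranspose_mul_self _ hinj).det_pos
  rw [conjTranspose_eq_transpose_of_trivial] at hpos
  exact hpos.ne'.isUnit

end Feedback

lemma sum_sq_sdiff_le_sum_sq_sdiff {α : Type*} [DecidableEq α] {z : α → ℝ} {S T : Finset α}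
    (hcard : S.card ≤ T.card) (hdom : ∀ i ∈ T, ∀ j ∉ T, |z j| ≤ |z i|) :
    ∑ j ∈ S \ T, z j ^ 2 ≤ ∑ i ∈ T \ S, z i ^ 2 := by
  rcases (S \ T).eq_empty_or_nonempty with hempty | hne
  · rw [hempty, Finset.sum_empty]
    exact Finset.sum_nonneg fun _ _ => sq_nonneg _
  obtain ⟨j₀, hj₀, hmax⟩ := (S \ T).exists_max_image (fun j => z j ^ 2) hne
  calc ∑ j ∈ S \ T, z j ^ 2 ≤ (S \ T).card • z j₀ ^ 2 := Finset.sum_le_card_nsmul _ _ _ hmax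
    _ ≤ (T \ S).card • z j₀ ^ 2 :=
      nsmul_le_nsmul_left (sq_nonneg _) (Finset.card_sdiff_le_card_sdiff_iff.2 hcard)
    _ ≤ ∑ i ∈ T \ S, z i ^ 2 := Finset.card_nsmul_le_sum _ _ _ fun i hi =>
      sq_le_sq.2 (hdom i (Finset.mem_sdiff.1 hi).1 j₀ (Finset.mem_sdiff.1 hj₀).2)

/-- On `S \ T` the entries of `z` are dominated by those on `T \ S`, where `z` agrees with
`z - x`. -/
lemma nsq_restr_compl_le_of_abs_le {n : ℕ} {x z : Fin n → ℝ} {S T : Finset (Fin n)}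
    (hx : Function.support x ⊆ S) (hcard : S.card ≤ T.card)
    (hdom : ∀ i ∈ T, ∀ j ∉ T, |z j| ≤ |z i|) :
    nsq (restr Tᶜ x) ≤ 2 * nsq (restr (S ∪ T) (x - z)) := by
  have hx0 : ∀ i ∉ S, x i = 0 := fun i hi => Function.notMem_support.1 fun h => hi (hx h)
  have hmiss : nsq (restr Tᶜ x) = ∑ j ∈ S \ T, x j ^ 2 := by
    rw [nsq_restr, Finset.sdiff_eq_inter_compl]
    refine (Finset.sum_subset Finset.inter_subset_right fun i _ hi => ?_).symm
    rw [hx0 i fun hS => hi (Finset.mem_inter.2 ⟨hS, ‹_›⟩)]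
    ring
  have hsplit : ∀ j, x j ^ 2 ≤ 2 * (x - z) j ^ 2 + 2 * z j ^ 2 := fun j => by
    simp only [Pi.sub_apply]
    nlinarith [sq_nonneg (x j - 2 * z j)]
  have hswap : ∑ i ∈ T \ S, z i ^ 2 = ∑ i ∈ T \ S, (x - z) i ^ 2 :=
    Finset.sum_congr rfl fun i hi => by simp [hx0 i (Finset.mem_sdiff.1 hi).2]
  have hunion : ∑ j ∈ S \ T, (x - z) j ^ 2 + ∑ i ∈ T \ S, (x - z) i ^ 2
      ≤ nsq (restr (S ∪ T) (x - z)) := by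
    rw [nsq_restr, ← Finset.sum_union disjoint_sdiff_sdiff]
    exact Finset.sum_le_sum_of_subset_of_nonneg
      (Finset.union_subset_union Finset.sdiff_subset Finset.sdiff_subset)
      fun _ _ _ => sq_nonneg _
  calc nsq (restr Tᶜ x) = ∑ j ∈ S \ T, x j ^ 2 := hmiss
    _ ≤ 2 * ∑ j ∈ S \ T, (x - z) j ^ 2 + 2 * ∑ j ∈ S \ T, z j ^ 2 := by
      rw [Finset.mul_sum, Finset.mul_sum, ← Finset.sum_add_distrib]
      exact Finset.sum_le_sum fun j _ => hsplit j
    _ ≤ 2 * ∑ j ∈ S \ T, (x - z) j ^ 2 + 2 * ∑ i ∈ T \ S, (x - z) i ^ 2 := by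
      rw [← hswap]
      linarith [sum_sq_sdiff_le_sum_sq_sdiff hcard hdom]
    _ ≤ 2 * nsq (restr (S ∪ T) (x - z)) := by linarith

lemma nrm_le_sqrt_pow_mul_of_nsq_succ_le {n : ℕ} {e : ℕ → Fin n → ℝ} {c : ℝ} (hc : 0 ≤ c)
    (h : ∀ k, nsq (e (k + 1)) ≤ c * nsq (e k)) (k : ℕ) : nrm (e k) ≤ √c ^ k * nrm (e 0) := by
  induction k with
  | zero => simp
  | succ k ih =>
    calc nrm (e (k + 1)) ≤ √c * nrm (e k) := by
          rw [nrm_eq_sqrt_nsq, nrm_eq_sqrt_nsq, ← Real.sqrt_mul hc]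
          exact Real.sqrt_le_sqrt (h k)
      _ ≤ √c * (√c ^ k * nrm (e 0)) := mul_le_mul_of_nonneg_left ih (Real.sqrt_nonneg c)
      _ = √c ^ (k + 1) * nrm (e 0) := by ring

namespace NSTSpec

variable {M N s : ℕ} {A : Matrix (Fin M) (Fin N) ℝ} {y : Fin M → ℝ} {T : ℕ → Finset (Fin N)}
  {xs μ : ℕ → Fin N → ℝ} {x : Fin N → ℝ}

lemma sub_iterate_succ (hspec : NSTSpec A y s T xs μ) (hpd : (A * Aᵀ).PosDef)
    (hy : y = A *ᵥ x) (k : ℕ) :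
    x - xs (k + 1) = (x - μ k) - ((precondMatrix A hpd)ᵀ * precondMatrix A hpd) *ᵥ (x - μ k) := by
  rw [hspec.2.2.2.2 k, precondMatrix_transpose_mul, hy, ← mulVec_sub, mulVec_mulVec,
    sub_add_eq_sub_sub]

lemma one_sub_sq_mul_nsq_sub_succ_le (hspec : NSTSpec A y s T xs μ) (hpd : (A * Aᵀ).PosDef)
    (hy : y = A *ᵥ x) (hx : Sparse s x) {δ γ : ℝ} (hA : IsRIP A (2 * s) δ) (hδ : δ < 1)
    (hB : IsRIP (precondMatrix A hpd) (3 * s) γ) (k : ℕ) :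
    (1 - δ ^ 2) * nsq (x - μ (k + 1)) ≤ 2 * γ ^ 2 * nsq (x - μ k) := by
  have hiter := hspec.sub_iterate_succ hpd hy k
  obtain ⟨hfeas, hcard, hdom, hμ, -⟩ := hspec
  set S := suppF x
  have hS : S.card ≤ s := hx
  have hxS : Function.support x ⊆ S := support_subset_suppF x
  have herr : ∀ k, Function.support (x - μ k) ⊆ ↑(S ∪ T k) := fun k => by
    rw [Finset.coe_union, hμ k]
    exact (Function.support_sub _ _).trans
      (Set.union_subset_union hxS (support_feedback_subset A _ _))
  have hcard₂ : ∀ k, (S ∪ T k).card ≤ 2 * s := fun k =>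
    (Finset.card_union_le _ _).trans (by rw [hcard k]; omega)
  have hcard₃ : ((S ∪ T (k + 1)) ∪ (S ∪ T k)).card ≤ 3 * s := by
    rw [← Finset.union_union_distrib_left]
    refine (Finset.card_union_le _ _).trans ?_
    have := Finset.card_union_le (T (k + 1)) (T k)
    rw [hcard, hcard] at this
    omega
  have horth : (A *ᵥ restr (T (k + 1)) (x - μ (k + 1))) ⬝ᵥ (A *ᵥ (x - μ (k + 1))) = 0 := by
    rw [hμ]
    exact dotProduct_restr_sub_feedback (hA.isUnit_det_gram hδ (by rw [hcard]; omega))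
      ((hfeas (k + 1)).trans hy)
  have hδstep := hA.one_sub_sq_mul_nsq_le (hcard₂ (k + 1)) (herr (k + 1)) (T (k + 1)) horth
  rw [hμ (k + 1), restr_compl_sub_feedback, ← hμ] at hδstep
  have hγstep := hB.nsq_restr_sub_gram_mulVec_le hcard₃ (herr k)
  rw [← hiter] at hγstep
  have hmiss := nsq_restr_compl_le_of_abs_le hxS (hS.trans (hcard (k + 1)).ge) (hdom (k + 1))
  linarith

end NSTSpec

theorem stmt8_general {M N : ℕ} (A : Matrix (Fin M) (Fin N) ℝ) (hpd : (A * Aᵀ).PosDef)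
    (s : ℕ) (x : Fin N → ℝ) (y : Fin M → ℝ)
    (hy : y = A.mulVec x) (hx : Sparse s x)
    (T : ℕ → Finset (Fin N)) (xs μ : ℕ → Fin N → ℝ)
    (hspec : NSTSpec A y s T xs μ)
    (δ2s γ3s : ℝ) (h0γ : 0 ≤ γ3s)
    (h2 : IsRIP A (2 * s) δ2s)
    (h3 : ∀ z : Fin N → ℝ, Sparse (3 * s) z →
      (1 - γ3s) * nsq z ≤ nsq ((psdSqrt hpd.inv.posSemidef * A).mulVec z))
    (hcond : δ2s ^ 2 + 2 * γ3s ^ 2 < 1) :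
    ∀ k : ℕ, nrm (x - μ k) ≤
      Real.sqrt (2 * γ3s ^ 2 / (1 - δ2s ^ 2)) ^ k * nrm (x - μ 0) := by
  have hδ : δ2s < 1 := by nlinarith [sq_nonneg γ3s]
  have hgap : 0 < 1 - δ2s ^ 2 := by nlinarith [sq_nonneg γ3s]
  have hB : IsRIP (precondMatrix A hpd) (3 * s) γ3s :=
    isRIP_of_mul_transpose_eq_one (precondMatrix_mul_transpose A hpd) h0γ h3
  refine nrm_le_sqrt_pow_mul_of_nsq_succ_le (e := fun k => x - μ k)
    (div_nonneg (by positivity) hgap.le) fun k => ?_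
  rw [div_mul_eq_mul_div, le_div_iff₀ hgap]
  linarith [hspec.one_sub_sq_mul_nsq_sub_succ_le hpd hy hx h2 hδ hB k]

/-- improved convergence condition for NST+HT+FB (noiseless). -/
theorem stmt8 {M N : ℕ} (A : Matrix (Fin M) (Fin N) ℝ) (hpd : (A * Aᵀ).PosDef)
    (s : ℕ) (x : Fin N → ℝ) (y : Fin M → ℝ)
    (hy : y = A.mulVec x) (hx : Sparse s x)
    (T : ℕ → Finset (Fin N)) (xs μ : ℕ → Fin N → ℝ)
    (hspec : NSTSpec A y s T xs μ)
    (δ2s γ3s : ℝ) (h0δ : 0 ≤ δ2s) (h0γ : 0 ≤ γ3s)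
    (h2 : IsRIP A (2 * s) δ2s)
    (h3 : ∀ z : Fin N → ℝ, Sparse (3 * s) z →
      (1 - γ3s) * nsq z ≤ nsq ((psdSqrt hpd.inv.posSemidef * A).mulVec z))
    (hcond : δ2s ^ 2 + 2 * γ3s ^ 2 < 1) :
    ∀ k : ℕ, nrm (x - μ k) ≤
      Real.sqrt (2 * γ3s ^ 2 / (1 - δ2s ^ 2)) ^ k * nrm (x - μ 0) :=
  stmt8_general A hpd s x y hy hx T xs μ hspec δ2s γ3s h0γ h2 h3 hcond
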